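/- Let H_2 be an r_2-regular graph on m − 2 vertices with Q-eigenvalues q_1(H_2) ≤ … ≤ q_{m−2}(H_2) (so q_{m−2}(H_2) = 2r_2), and let H_{uv} = K_2 ∨ H_2 be the join of an edge uv with H_2. Then the multiset of signless Laplacian eigenvalues of H_{uv} is σ(Q(H_{uv})) = { q_j(H_2) + 2 : 1 ≤ j ≤ m − 3 } ∪ { m − 2, ζ, η }, where ζ, η are the two roots of (x − 2r_2 − 2)(x − m) − 2(m − 2) = 0. -/

import Mathlib

open Matrix BigOperators
open scoped Classical

/-- The adjacency matrix of a simple graph, with entries in `R`. -/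
noncomputable def adjMat (R : Type*) [Zero R] [One R] {V : Type*} [Fintype V]
    (G : SimpleGraph V) : Matrix V V R :=
  Matrix.of fun x y => if G.Adj x y then (1 : R) else 0

/-- The degree of a vertex. -/
noncomputable def gdeg {V : Type*} [Fintype V] (G : SimpleGraph V) (x : V) : ℕ :=
  (Finset.univ.filter fun y => G.Adj x y).card

/-- `G` is `r`-regular. -/
def IsReg {V : Type*} [Fintype V] (G : SimpleGraph V) (r : ℕ) : Prop :=
  ∀ x, gdeg G x = r

/-- The signless Laplacian matrix `Q(G) = D(G) + A(G)`. -/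
noncomputable def qMat (R : Type*) [AddMonoidWithOne R] {V : Type*} [Fintype V]
    (G : SimpleGraph V) : Matrix V V R :=
  Matrix.diagonal (fun x => (gdeg G x : R)) + adjMat R G

/-- The adjacency spectrum, as the multiset of real roots (with multiplicity) of the
characteristic polynomial of the (real symmetric) adjacency matrix. -/
noncomputable def aSpec {V : Type*} [Fintype V] (G : SimpleGraph V) : Multiset ℝ :=
  (adjMat ℝ G).charpoly.roots

/-- The signless Laplacian spectrum. -/
noncomputable def qSpec {V : Type*} [Fintype V] (G : SimpleGraph V) : Multiset ℝ :=
  (qMat ℝ G).charpoly.roots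

/-- The `M`-coronal `Γ_M(x) = 1ᵀ (xI − M)⁻¹ 1`, the sum of the entries of `(xI − M)⁻¹`. -/
noncomputable def coronal {n R : Type*} [Fintype n] [DecidableEq n] [Field R]
    (M : Matrix n n R) (x : R) : R :=
  ∑ i, ∑ j, ((x • (1 : Matrix n n R) - M)⁻¹) i j

/-- Embeds a `P × P` matrix as a `V × V` matrix supported on the image of `g`, zero elsewhere.
If the vertices of `V` are ordered listing the image of `g` first, this is `diag(M, 0)`. -/
noncomputable def embedMatrix {P V R : Type*} [Fintype P] [AddCommMonoid R]
    (g : P → V) (M : Matrix P P R) : Matrix V V R :=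
  Matrix.of fun x y => ∑ px : P, ∑ py : P, if x = g px ∧ y = g py then M px py else 0

/-- The graph `H − v` obtained by deleting the vertex `v`. -/
def delVert {W : Type*} (H : SimpleGraph W) (v : W) : SimpleGraph {w : W // w ≠ v} :=
  H.comap Subtype.val

/-- The graph `H − {u,v}` obtained by deleting the two vertices `u, v`. -/
def delVert2 {W : Type*} (H : SimpleGraph W) (u v : W) :
    SimpleGraph {w : W // w ≠ u ∧ w ≠ v} :=
  H.comap Subtype.val

/-- The join `G₁ ∨ G₂` of two vertex-disjoint graphs: their disjoint union together with all
edges between the two parts. -/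
def sgJoin {α β : Type*} (G₁ : SimpleGraph α) (G₂ : SimpleGraph β) : SimpleGraph (α ⊕ β) where
  Adj x y :=
    match x, y with
    | Sum.inl a, Sum.inl b => G₁.Adj a b
    | Sum.inl _, Sum.inr _ => True
    | Sum.inr _, Sum.inl _ => True
    | Sum.inr a, Sum.inr b => G₂.Adj a b
  symm := by
    refine ⟨?_⟩
    rintro (a | a) (b | b) h
    · exact h.symm
    · trivial
    · trivial
    · exact h.symm
  loopless := by
    refine ⟨?_⟩
    rintro (a | a) h
    · exact G₁.loopless.irrefl a h
    · exact G₂.loopless.irrefl a h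

/-- The graph `G[F, V_k, H_v]` with `k` pockets: take one copy of `F` and `k` disjoint copies
of `H` (with specified vertex `v`), identifying the vertex `v` of the `i`-th copy with the
vertex `f i` of `F`.  The `i`-th copy of `H − v` is carried by `{i} × {w // w ≠ v}`. -/
def pocketGraph {V W : Type*} (F : SimpleGraph V) (H : SimpleGraph W) (v : W)
    {k : ℕ} (f : Fin k ↪ V) : SimpleGraph (V ⊕ (Fin k × {w : W // w ≠ v})) where
  Adj x y :=
    match x, y with
    | Sum.inl a, Sum.inl b => F.Adj a b
    | Sum.inl a, Sum.inr (i, w) => a = f i ∧ H.Adj v w.1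
    | Sum.inr (i, w), Sum.inl a => a = f i ∧ H.Adj v w.1
    | Sum.inr (i, w), Sum.inr (j, w') => i = j ∧ H.Adj w.1 w'.1
  symm := by
    refine ⟨?_⟩
    rintro (a | ⟨i, w⟩) (b | ⟨j, w'⟩) h
    · exact h.symm
    · exact h
    · exact h
    · exact ⟨h.1.symm, h.2.symm⟩
  loopless := by
    refine ⟨?_⟩
    rintro (a | ⟨i, w⟩) h
    · exact F.loopless.irrefl a h
    · exact H.loopless.irrefl _ h.2

/-- The graph `G[F, E_k, H_{uv}]` with `k` edge-pockets: take one copy of `F` and `k` disjoint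
copies of `H` (with specified edge `uv`), pasting the edge `uv` of the `i`-th copy onto the
edge `e_i = (a i)(b i)` of `F` (identifying `u` with `a i` and `v` with `b i`).  The `i`-th
copy of `H − {u,v}` is carried by `{i} × {w // w ≠ u ∧ w ≠ v}`. -/
def edgePocketGraph {V W : Type*} (F : SimpleGraph V) (H : SimpleGraph W) (u v : W)
    {k : ℕ} (a b : Fin k → V) :
    SimpleGraph (V ⊕ (Fin k × {w : W // w ≠ u ∧ w ≠ v})) where
  Adj x y :=
    match x, y with
    | Sum.inl s, Sum.inl t => F.Adj s t
    | Sum.inl s, Sum.inr (i, w) => (s = a i ∧ H.Adj u w.1) ∨ (s = b i ∧ H.Adj v w.1)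
    | Sum.inr (i, w), Sum.inl s => (s = a i ∧ H.Adj u w.1) ∨ (s = b i ∧ H.Adj v w.1)
    | Sum.inr (i, w), Sum.inr (j, w') => i = j ∧ H.Adj w.1 w'.1
  symm := by
    refine ⟨?_⟩
    rintro (s | ⟨i, w⟩) (t | ⟨j, w'⟩) h
    · exact h.symm
    · exact h
    · exact h
    · exact ⟨h.1.symm, h.2.symm⟩
  loopless := by
    refine ⟨?_⟩
    rintro (s | ⟨i, w⟩) h
    · exact F.loopless.irrefl s h
    · exact H.loopless.irrefl _ h.2

/-!
Listing `u, v` first, `xI − Q(K₂ ∨ H₂)` is a block matrix whose off-diagonal blocks are all `−1`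
and whose lower block is `(x − 2)I − Q(H₂)`. Its Schur complement reduces the determinant to
`det((x − 2)I − Q(H₂))` times a `2 × 2` determinant in the coronal `Γ(x − 2)` of `Q(H₂)`. As `H₂`
is `r₂`-regular, the all-ones vector is an eigenvector of `Q(H₂)` for `2r₂`, so `2r₂` is a
Q-eigenvalue of `H₂` and `Γ(y) = (m − 2)/(y − 2r₂)`; the factor `x − 2 − 2r₂` of the first
determinant then cancels this denominator, leaving `(x − m + 2)` times the quadratic defining
`ζ, η`. The identity holds for all but finitely many `x`, hence as polynomials.
-/

open Polynomial

lemma Polynomial.eq_of_eval_eq_off_shifted_roots {K : Type*} [Field K] [Infinite K]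
    {p f g : K[X]} (hp : p ≠ 0) (a : K) (h : ∀ x, p.eval (x - a) ≠ 0 → f.eval x = g.eval x) :
    f = g := by
  refine eq_of_infinite_eval_eq f g (Set.Infinite.mono (fun x hx => h x hx) ?_)
  have hfin : {x : K | p.eval (x - a) = 0}.Finite :=
    ((finite_setOfPred_isRoot hp).image (· + a)).subset fun x hx => ⟨x - a, hx, sub_add_cancel x a⟩
  exact hfin.infinite_compl

section Matrix

variable {m n K : Type*} [Fintype m] [DecidableEq m] [Fintype n] [DecidableEq n] [Field K]

lemma eval_charpoly_eq_det_smul_one_sub (M : Matrix n n K) (x : K) :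
    M.charpoly.eval x = (x • (1 : Matrix n n K) - M).det := by
  rw [eval_charpoly, scalar_apply, smul_one_eq_diagonal]

lemma isRoot_charpoly_of_mulVec_one [Nonempty n] {M : Matrix n n K} {r : K}
    (hM : M *ᵥ 1 = fun _ => r) : M.charpoly.IsRoot r := by
  rw [IsRoot.def, eval_charpoly, ← exists_mulVec_eq_zero_iff]
  refine ⟨1, one_ne_zero, ?_⟩
  ext i
  simp [sub_mulVec, hM]

lemma coronal_eq_of_mulVec_one {M : Matrix n n K} {r x : K} (hM : M *ᵥ 1 = fun _ => r)
    (hx : (x • (1 : Matrix n n K) - M).det ≠ 0) :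
    coronal M x = Fintype.card n / (x - r) := by
  set D := x • (1 : Matrix n n K) - M
  have hD : D *ᵥ 1 = (x - r) • 1 := by
    ext i
    simp [D, sub_mulVec, smul_mulVec, hM]
  have hrow : ∀ i, ∑ j, D⁻¹ i j = (x - r)⁻¹ := fun i => by
    refine eq_inv_of_mul_eq_one_right ?_
    have h := congrFun (congrArg (D⁻¹ *ᵥ ·) hD) i
    rw [mulVec_mulVec, nonsing_inv_mul D (isUnit_iff_ne_zero.2 hx), one_mulVec,
      mulVec_smul] at h
    simpa [mulVec, dotProduct] using h.symm
  simp [coronal, D, hrow, div_eq_mul_inv]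

lemma det_fromBlocks_neg_ones (A : Matrix m m K) (M : Matrix n n K) (x : K)
    (hx : (x • (1 : Matrix n n K) - M).det ≠ 0) :
    (fromBlocks A (of fun _ _ => -1) (of fun _ _ => -1) (x • 1 - M)).det
      = (x • 1 - M).det * (A - coronal M x • of fun _ _ => 1).det := by
  have := (x • 1 - M).invertibleOfIsUnitDet (isUnit_iff_ne_zero.2 hx)
  rw [det_fromBlocks₂₂, invOf_eq_nonsing_inv]
  congr 3
  ext i j
  simp [mul_apply, coronal, Finset.sum_comm (γ := n)]

lemma det_bool (M : Matrix Bool Bool K) :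
    M.det = M false false * M true true - M false true * M true false := by
  rw [← det_submatrix_equiv_self finTwoEquiv, det_fin_two]
  simp [finTwoEquiv]

lemma Matrix.IsHermitian.charpoly_eq_X_sub_C_mul {A : Matrix n n ℝ} (hA : A.IsHermitian) {r : ℝ}
    (hr : A.charpoly.IsRoot r) :
    A.charpoly = (X - C r) * ((A.charpoly.roots.erase r).map (X - C ·)).prod := by
  have hmem : r ∈ A.charpoly.roots := (mem_roots (charpoly_monic A).ne_zero).2 hr
  conv_lhs => rw [hA.splits_charpoly.eq_prod_roots_of_monic (charpoly_monic A),
    ← Multiset.cons_erase hmem]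
  rw [Multiset.map_cons, Multiset.prod_cons]

end Matrix

section Join

variable {α β : Type*}

@[simp] lemma sgJoin_adj_inl_inl (G₁ : SimpleGraph α) (G₂ : SimpleGraph β) (a a' : α) :
    (sgJoin G₁ G₂).Adj (.inl a) (.inl a') ↔ G₁.Adj a a' := Iff.rfl

@[simp] lemma sgJoin_adj_inr_inr (G₁ : SimpleGraph α) (G₂ : SimpleGraph β) (b b' : β) :
    (sgJoin G₁ G₂).Adj (.inr b) (.inr b') ↔ G₂.Adj b b' := Iff.rfl

variable [Fintype α] [Fintype β]

lemma gdeg_sgJoin_inl (G₁ : SimpleGraph α) (G₂ : SimpleGraph β) (a : α) :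
    gdeg (sgJoin G₁ G₂) (.inl a) = gdeg G₁ a + Fintype.card β := by
  rw [gdeg, gdeg, Finset.card_filter, Finset.card_filter, Fintype.sum_sum_type]
  congr 1
  simp [sgJoin]

lemma gdeg_sgJoin_inr (G₁ : SimpleGraph α) (G₂ : SimpleGraph β) (b : β) :
    gdeg (sgJoin G₁ G₂) (.inr b) = gdeg G₂ b + Fintype.card α := by
  rw [gdeg, gdeg, Finset.card_filter, Finset.card_filter, Fintype.sum_sum_type, add_comm]
  congr 1
  simp [sgJoin]

lemma qMat_sgJoin {R : Type*} [AddMonoidWithOne R] [DecidableEq α] [DecidableEq β]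
    (G₁ : SimpleGraph α) (G₂ : SimpleGraph β) :
    qMat R (sgJoin G₁ G₂)
      = fromBlocks (qMat R G₁ + diagonal fun _ => (Fintype.card β : R)) (of fun _ _ => 1)
          (of fun _ _ => 1) (qMat R G₂ + diagonal fun _ => (Fintype.card α : R)) := by
  ext (a | b) (a' | b')
  · by_cases h : a = a' <;> simp [h, qMat, adjMat, gdeg_sgJoin_inl]
  · simp [qMat, adjMat, sgJoin]
  · simp [qMat, adjMat, sgJoin]
  · by_cases h : b = b' <;> simp [h, qMat, adjMat, gdeg_sgJoin_inr]

lemma eval_charpoly_qMat_sgJoin {K : Type*} [Field K] [DecidableEq α] [DecidableEq β]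
    (G₁ : SimpleGraph α) (G₂ : SimpleGraph β) {x : K}
    (hx : (qMat K G₂).charpoly.eval (x - Fintype.card α) ≠ 0) :
    (qMat K (sgJoin G₁ G₂)).charpoly.eval x
      = (qMat K G₂).charpoly.eval (x - Fintype.card α)
        * ((x - Fintype.card β) • 1 - qMat K G₁
            - coronal (qMat K G₂) (x - Fintype.card α) • of fun _ _ => 1).det := by
  rw [eval_charpoly_eq_det_smul_one_sub] at hx ⊢
  have hblock : x • 1 - qMat K (sgJoin G₁ G₂)
      = fromBlocks ((x - Fintype.card β) • 1 - qMat K G₁) (of fun _ _ => -1)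
          (of fun _ _ => -1) ((x - Fintype.card α) • 1 - qMat K G₂) := by
    rw [qMat_sgJoin]
    ext (a | b) (a' | b') <;> simp [one_apply, diagonal_apply, sub_smul] <;> ring
  rw [eval_charpoly_eq_det_smul_one_sub, hblock, det_fromBlocks_neg_ones _ _ _ hx]

end Join

section Graph

variable {V W : Type*} [Fintype V] [Fintype W]

lemma qMat_isHermitian (G : SimpleGraph V) : (qMat ℝ G).IsHermitian := by
  ext i j
  by_cases h : i = j
  · simp [h, qMat, adjMat]
  · simp [h, Ne.symm h, qMat, adjMat, SimpleGraph.adj_comm]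

lemma qSpec_eq_roots_charpoly [DecidableEq V] (G : SimpleGraph V) :
    qSpec G = (qMat ℝ G).charpoly.roots := by
  -- `qSpec` is built with the classical `DecidableEq V` instance.
  unfold qSpec
  congr!

lemma qMat_mulVec_one {R : Type*} [Semiring R] (G : SimpleGraph V) :
    qMat R G *ᵥ 1 = fun x => 2 * (gdeg G x : R) := by
  ext x
  simp [mulVec, dotProduct, qMat, adjMat, diagonal_apply, Finset.sum_add_distrib, gdeg,
    Finset.sum_boole, two_mul]

lemma qMat_mulVec_one_of_isReg {R : Type*} [Semiring R] {G : SimpleGraph V} {r : ℕ}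
    (hG : IsReg G r) : qMat R G *ᵥ 1 = fun _ => 2 * (r : R) := by
  simp [qMat_mulVec_one, hG _]

lemma qMat_top_bool {R : Type*} [AddMonoidWithOne R] :
    qMat R (⊤ : SimpleGraph Bool) = of fun _ _ => 1 := by
  ext i j
  cases i <;> cases j <;> simp [qMat, adjMat, gdeg, Finset.filter_insert, Finset.filter_singleton]

lemma eval_charpoly_qMat_edgeJoin [DecidableEq W] {H : SimpleGraph W} {r : ℕ} (hH : IsReg H r)
    {x : ℝ} (hx : (qMat ℝ H).charpoly.eval (x - 2) ≠ 0) :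
    (qMat ℝ (sgJoin (⊤ : SimpleGraph Bool) H)).charpoly.eval x
      = (qMat ℝ H).charpoly.eval (x - 2) * ((x - Fintype.card W)
          * (x - Fintype.card W - 2 - 2 * (Fintype.card W / (x - 2 - 2 * r)))) := by
  have hx' : (qMat ℝ H).charpoly.eval (x - Fintype.card Bool) ≠ 0 := by simpa using hx
  rw [eval_charpoly_qMat_sgJoin _ _ hx', qMat_top_bool, coronal_eq_of_mulVec_one
    (qMat_mulVec_one_of_isReg hH) (by rwa [← eval_charpoly_eq_det_smul_one_sub]), det_bool,
    Fintype.card_bool, Nat.cast_ofNat]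
  congr 1
  simp
  ring

end Graph

theorem signlessLap_spec_edgeJoin_regular_general
    {W : Type*} [Fintype W]
    (m r₂ : ℕ) (hm : Fintype.card W = m - 2) (hm3 : 3 ≤ m)
    (H₂ : SimpleGraph W) (hreg : IsReg H₂ r₂)
    (ζ η : ℝ)
    (hζη : ∀ x : ℝ,
      (x - (2 * (r₂ : ℝ) + 2)) * (x - (m : ℝ)) - 2 * ((m : ℝ) - 2) = (x - ζ) * (x - η)) :
    qSpec (sgJoin (⊤ : SimpleGraph Bool) H₂)
      = ((qSpec H₂).erase (2 * (r₂ : ℝ))).map (fun q => q + 2)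
        + ({(m : ℝ) - 2, ζ, η} : Multiset ℝ) := by
  classical
  have : Nonempty W := Fintype.card_pos_iff.mp (by omega)
  have hcard : (Fintype.card W : ℝ) = m - 2 := by rw [hm, Nat.cast_sub (by omega)]; norm_num
  set S := (qSpec H₂).erase (2 * (r₂ : ℝ)) with hS
  have hfactor : (qMat ℝ H₂).charpoly = (X - C (2 * (r₂ : ℝ))) * (S.map (X - C ·)).prod := by
    rw [hS, qSpec_eq_roots_charpoly]
    exact (qMat_isHermitian H₂).charpoly_eq_X_sub_C_mul
      (isRoot_charpoly_of_mulVec_one (qMat_mulVec_one_of_isReg hreg))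
  rw [qSpec_eq_roots_charpoly, ← roots_multiset_prod_X_sub_C (S.map (· + 2) + _)]
  congr 1
  refine eq_of_eval_eq_off_shifted_roots (charpoly_monic (qMat ℝ H₂)).ne_zero 2 fun x hx => ?_
  rw [eval_charpoly_qMat_edgeJoin hreg hx, hfactor]
  rw [hfactor] at hx
  simp only [eval_mul, eval_multiset_prod, Multiset.map_map, Function.comp_def, eval_sub, eval_X,
    eval_C, Multiset.map_add, Multiset.prod_add, Multiset.insert_eq_cons, Multiset.map_cons,
    Multiset.prod_cons, Multiset.map_singleton, Multiset.prod_singleton] at hx ⊢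
  have hc : x - 2 - 2 * (r₂ : ℝ) ≠ 0 := left_ne_zero_of_mul hx
  simp only [show ∀ q : ℝ, x - (q + 2) = x - 2 - q from fun q => by ring, hcard]
  set P := (S.map fun q => x - 2 - q).prod
  field_simp
  linear_combination P * (x - (m - 2)) * hζη x

/-- equation (3): signless Laplacian spectrum of the join of an edge with a
regular graph. -/
theorem signlessLap_spec_edgeJoin_regular
    {W : Type*} [Fintype W] [DecidableEq W]
    (m r₂ : ℕ) (hm : Fintype.card W = m - 2) (hm3 : 3 ≤ m)
    (H₂ : SimpleGraph W) (hreg : IsReg H₂ r₂)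
    (ζ η : ℝ)
    (hζη : ∀ x : ℝ,
      (x - (2 * (r₂ : ℝ) + 2)) * (x - (m : ℝ)) - 2 * ((m : ℝ) - 2) = (x - ζ) * (x - η)) :
    qSpec (sgJoin (⊤ : SimpleGraph Bool) H₂)
      = ((qSpec H₂).erase (2 * (r₂ : ℝ))).map (fun q => q + 2)
        + ({(m : ℝ) - 2, ζ, η} : Multiset ℝ) :=
  signlessLap_spec_edgeJoin_regular_general m r₂ hm hm3 H₂ hreg ζ η hζη
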